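/- arXiv:1401.3814 — 4 statements merged into one kernel-verified Lean document; each statement's English description precedes it below -/
import Mathlib

section
/- Let W_θ be a one-parameter exponential family of transition matrices with potential function φ and stationary distribution P¹_θ. Then the derivative of the potential equals the stationary expectation of the generator: φ'(θ) = Σ_{x,x'} P¹_θ(x')·W_θ(x|x')·g(x,x'). -/
open Matrix Real

/-- A (column-)transition matrix: nonnegative entries, each column sums to 1. -/
def IsTransition {X : Type*} [Fintype X] (W : Matrix X X ℝ) : Prop :=
  (∀ x x', 0 ≤ W x x') ∧ ∀ x', ∑ x, W x x' = 1

/-- Irreducibility: some power has a positive entry for every pair. -/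
def IsIrred {X : Type*} [Fintype X] [DecidableEq X] (W : Matrix X X ℝ) : Prop :=
  ∀ x x', ∃ n : ℕ, 0 < (W ^ n) x x'

/-- `r` is the Perron–Frobenius eigenvalue of `M`: it is positive and has a
strictly positive (right) eigenvector. For irreducible nonnegative matrices this
characterizes the Perron–Frobenius eigenvalue uniquely. -/
def IsPerron {X : Type*} [Fintype X] (M : Matrix X X ℝ) (r : ℝ) : Prop :=
  0 < r ∧ ∃ v : X → ℝ, (∀ x, 0 < v x) ∧ M *ᵥ v = r • v


/-- The tilted matrix `W̄_θ(x|x') = W(x|x')·e^{θ g(x,x')}`. -/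
noncomputable def tilted {X : Type*} [Fintype X] (W : Matrix X X ℝ) (g : X → X → ℝ) (θ : ℝ) :
    Matrix X X ℝ :=
  Matrix.of fun x x' => W x x' * Real.exp (θ * g x x')

/-- The exponential family of transition matrices
`W_θ(x|x') = λ_θ⁻¹ · v_θ(x) · W̄_θ(x|x') · v_θ(x')⁻¹`, with `λ_θ = e^{φ(θ)}` the
Perron–Frobenius eigenvalue and `v_θ` the Perron eigenvector of `W̄_θᵀ`. -/
noncomputable def expFam {X : Type*} [Fintype X] (W : Matrix X X ℝ) (g : X → X → ℝ)
    (φ : ℝ → ℝ) (v : ℝ → X → ℝ) (θ : ℝ) : Matrix X X ℝ :=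
  Matrix.of fun x x' =>
    (Real.exp (φ θ))⁻¹ * v θ x * (W x x' * Real.exp (θ * g x x')) * (v θ x')⁻¹

/-- `φ` and `v` constitute the Perron data of the family of tilted matrices:
`v_θ` is a positive eigenvector of `W̄_θᵀ` with eigenvalue `e^{φ(θ)}`. -/
def IsPerronData {X : Type*} [Fintype X] (W : Matrix X X ℝ) (g : X → X → ℝ)
    (φ : ℝ → ℝ) (v : ℝ → X → ℝ) : Prop :=
  ∀ θ : ℝ, (∀ x, 0 < v θ x) ∧ (tilted W g θ)ᵀ *ᵥ v θ = Real.exp (φ θ) • v θ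

/-- `P` is a stationary distribution of the transition matrix `M`. -/
def IsStationaryDistrib {X : Type*} [Fintype X] (M : Matrix X X ℝ) (P : X → ℝ) : Prop :=
  (∀ x, 0 ≤ P x) ∧ (∑ x, P x = 1) ∧ M *ᵥ P = P

/-!
Rather than differentiating the Perron eigenvector, we show that `φ` lies above its tangent
line at `θ` with slope `E = Σ P¹_θ(x') W_θ(x|x') g(x,x')`. For every `σ`,
`W_σ = W_θ · e^B` with `B = φ(θ) - φ(σ) + (f(x) - f(x')) + (σ - θ) g`, `f = log v_σ - log v_θ`.
Both matrices are column-stochastic, so under the stationary joint law `Q = P¹_θ(x') W_θ(x|x')`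
we have `E_Q[e^B] = 1`, while the telescoping part of `B` has zero mean because both marginals
of `Q` are `P¹_θ`. Hence `B ≤ e^B - 1` gives `φ(θ) - φ(σ) + (σ - θ) E ≤ 0`, and a differentiable
function with a supporting line at `θ` has that line's slope as derivative.
-/

open Filter Topology

theorem deriv_eq_of_eventually_add_mul_le {f : ℝ → ℝ} {a c : ℝ} (hf : DifferentiableAt ℝ f a)
    (h : ∀ᶠ y in 𝓝 a, f a + (y - a) * c ≤ f y) : deriv f a = c := by
  have hline : HasDerivAt (fun y => (y - a) * c) c a := by
    simpa using ((hasDerivAt_id a).sub_const a).mul_const c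
  have hmin : IsLocalMin (fun y => f y - (y - a) * c) a :=
    h.mono fun y hy => by simp only [sub_self, zero_mul, sub_zero]; linarith
  linarith [hmin.hasDerivAt_eq_zero (hf.hasDerivAt.sub hline)]

section DoubleSum

variable {X Y : Type*} [Fintype X] [Fintype Y]

theorem sum_sum_mul_le_sum_sum_mul_exp_sub {Q B : X → Y → ℝ} (hQ : ∀ x y, 0 ≤ Q x y) :
    ∑ x, ∑ y, Q x y * B x y ≤ ∑ x, ∑ y, Q x y * exp (B x y) - ∑ x, ∑ y, Q x y := by
  simp only [← Finset.sum_sub_distrib, ← mul_sub_one]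
  gcongr with x _ y _
  · exact hQ x y
  · linarith [add_one_le_exp (B x y)]

theorem sum_sum_mul_sub_eq_zero {Q : X → X → ℝ} {P : X → ℝ}
    (hrow : ∀ x, ∑ x', Q x x' = P x) (hcol : ∀ x', ∑ x, Q x x' = P x') (f : X → ℝ) :
    ∑ x, ∑ x', Q x x' * (f x - f x') = 0 := by
  simp only [mul_sub, Finset.sum_sub_distrib]
  rw [Finset.sum_comm (f := fun x x' => Q x x' * f x')]
  simp only [← Finset.sum_mul, hrow, hcol, sub_self]

end DoubleSum

section ExpFam

variable {X : Type*} [Fintype X] {W : Matrix X X ℝ} {g : X → X → ℝ} {φ : ℝ → ℝ}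
  {v : ℝ → X → ℝ}

theorem IsPerronData.sum_expFam_apply (hPD : IsPerronData W g φ v) (σ : ℝ) (x' : X) :
    ∑ x, expFam W g φ v σ x x' = 1 := by
  have heig : ∑ x, W x x' * exp (σ * g x x') * v σ x = exp (φ σ) * v σ x' := by
    simpa [mulVec, dotProduct, tilted] using congrFun (hPD σ).2 x'
  have hv : v σ x' ≠ 0 := ((hPD σ).1 x').ne'
  calc ∑ x, expFam W g φ v σ x x'
      = (exp (φ σ))⁻¹ * (v σ x')⁻¹ * ∑ x, W x x' * exp (σ * g x x') * v σ x := by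
        rw [Finset.mul_sum]
        refine Finset.sum_congr rfl fun x _ => ?_
        simp only [expFam, of_apply]
        ring
    _ = 1 := by rw [heig]; field_simp

theorem IsPerronData.expFam_nonneg (hPD : IsPerronData W g φ v) (hW : ∀ x x', 0 ≤ W x x')
    (σ : ℝ) (x x' : X) : 0 ≤ expFam W g φ v σ x x' := by
  have := (hPD σ).1 x
  have := (hPD σ).1 x'
  have := hW x x'
  simp only [expFam, of_apply]
  positivity

theorem IsPerronData.expFam_apply_eq_mul_exp (hPD : IsPerronData W g φ v) (θ σ : ℝ) (x x' : X) :
    expFam W g φ v σ x x' = expFam W g φ v θ x x' *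
      exp (φ θ - φ σ + ((log (v σ x) - log (v θ x)) - (log (v σ x') - log (v θ x')))
        + (σ - θ) * g x x') := by
  have hσ := (hPD σ).1
  have hθ := (hPD θ).1
  have hexp : exp (σ * g x x') = exp (θ * g x x') * exp ((σ - θ) * g x x') := by
    rw [← exp_add]; ring_nf
  simp only [expFam, of_apply, exp_add, exp_sub, exp_log (hσ _), exp_log (hθ _), hexp]
  have := (hσ x).ne'; have := (hθ x).ne'; have := (hσ x').ne'; have := (hθ x').ne'
  field_simp

theorem IsPerronData.add_mul_le_of_isStationaryDistrib (hPD : IsPerronData W g φ v)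
    (hW : ∀ x x', 0 ≤ W x x') {θ : ℝ} {P : X → ℝ}
    (hP : IsStationaryDistrib (expFam W g φ v θ) P) (σ : ℝ) :
    φ θ + (σ - θ) * ∑ x, ∑ x', P x' * expFam W g φ v θ x x' * g x x' ≤ φ σ := by
  obtain ⟨hP0, hP1, hPstat⟩ := hP
  set Q : X → X → ℝ := fun x x' => P x' * expFam W g φ v θ x x'
  set f : X → ℝ := fun x => log (v σ x) - log (v θ x)
  have hQ : ∀ x x', 0 ≤ Q x x' := fun x x' => mul_nonneg (hP0 x') (hPD.expFam_nonneg hW θ x x')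
  have hrow : ∀ x, ∑ x', Q x x' = P x := fun x => by
    simpa [Q, mulVec, dotProduct, mul_comm] using congrFun hPstat x
  have hcol : ∀ x', ∑ x, Q x x' = P x' := fun x' => by
    simp only [Q, ← Finset.mul_sum, hPD.sum_expFam_apply, mul_one]
  have hmass : ∑ x, ∑ x', Q x x' = 1 := by simp only [hrow, hP1]
  have htilt : ∑ x, ∑ x', Q x x' * exp (φ θ - φ σ + (f x - f x') + (σ - θ) * g x x') = 1 := by
    rw [Finset.sum_comm]
    simp only [Q, f, mul_assoc, ← hPD.expFam_apply_eq_mul_exp, ← Finset.mul_sum,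
      hPD.sum_expFam_apply, mul_one, hP1]
  have hmean : ∑ x, ∑ x', Q x x' * (φ θ - φ σ + (f x - f x') + (σ - θ) * g x x')
      = φ θ - φ σ + (σ - θ) * ∑ x, ∑ x', Q x x' * g x x' := by
    simp only [mul_add, Finset.sum_add_distrib, sum_sum_mul_sub_eq_zero hrow hcol,
      ← Finset.sum_mul, hmass, one_mul, add_zero, Finset.mul_sum, mul_left_comm]
  have hgibbs := sum_sum_mul_le_sum_sum_mul_exp_sub
    (B := fun x x' => φ θ - φ σ + (f x - f x') + (σ - θ) * g x x') hQ
  rw [hmean, htilt, hmass] at hgibbs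
  linarith

end ExpFam

theorem deriv_potential_eq_expectation_general {X : Type*} [Fintype X]
    (W : Matrix X X ℝ) (g : X → X → ℝ)
    (hW : IsTransition W)
    (φ : ℝ → ℝ) (v : ℝ → X → ℝ) (hPD : IsPerronData W g φ v)
    (P1 : ℝ → X → ℝ) (hstat : ∀ θ : ℝ, IsStationaryDistrib (expFam W g φ v θ) (P1 θ))
    (θ : ℝ) (hφdiff : DifferentiableAt ℝ φ θ) :
    deriv φ θ = ∑ x, ∑ x', P1 θ x' * expFam W g φ v θ x x' * g x x' :=
  deriv_eq_of_eventually_add_mul_le hφdiff <| Eventually.of_forall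
    (hPD.add_mul_le_of_isStationaryDistrib hW.1 (hstat θ))

/-- the derivative of the potential function equals the stationary
expectation of the generator:
`φ'(θ) = Σ_{x,x'} P¹_θ(x')·W_θ(x|x')·g(x,x')`. -/
theorem deriv_potential_eq_expectation {X : Type*} [Fintype X] [DecidableEq X]
    (W : Matrix X X ℝ) (g : X → X → ℝ)
    (hW : IsTransition W) (hirr : IsIrred W)
    (φ : ℝ → ℝ) (v : ℝ → X → ℝ) (hPD : IsPerronData W g φ v)
    (P1 : ℝ → X → ℝ) (hstat : ∀ θ : ℝ, IsStationaryDistrib (expFam W g φ v θ) (P1 θ))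
    (θ : ℝ) (hφdiff : DifferentiableAt ℝ φ θ) :
    deriv φ θ = ∑ x, ∑ x', P1 θ x' * expFam W g φ v θ x x' * g x x' :=
  deriv_potential_eq_expectation_general W g hW φ v hPD P1 hstat θ hφdiff
end

section
/- The Fisher information J²_θ of the joint distribution family {W_θ × P¹_θ}_θ on X × X decomposes as J²_θ = φ''(θ) + J¹_θ, where J¹_θ is the Fisher information of the stationary distribution family {P¹_θ}_θ. -/
open Matrix Real

/-- `P` is a stationary distribution of the transition matrix `M`. -/
def IsStationaryDistr {X : Type*} [Fintype X] (M : Matrix X X ℝ) (P : X → ℝ) : Prop :=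
  (∀ x, 0 ≤ P x) ∧ (∑ x, P x = 1) ∧ M *ᵥ P = P

/-! Write `Q_t(x,x') = W_t(x|x')·P¹_t(x')`. Where it is positive,
`log Q_t = -φ(t) + t·g + log W + log v_t(x) - log v_t(x') + log P¹_t(x')`, so the joint score is
`σ = g - φ' + a(x) - a(x') + r(x')` with `a = (log v)'` and `r = (log P¹)'`, and `Q' = Q·σ` everywhere.
Both marginals of `Q_t` equal `P¹_t` (stationarity, and column sums `1` by the Perron eigenvector
equation), hence both marginals of `Q'` equal `P¹'`. Against a weight with equal marginals the
coboundary `a(x) - a(x')` integrates to zero, so `J² = ∑ Q'·σ = ∑ Q'·g - φ'·∑ P¹' + ∑ P¹'·r = ∑ Q'·g + J¹`.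
The same computation at order zero gives `φ'(t) = ∑ Q_t·g` for every `t`, and differentiating it
identifies `∑ Q'·g` with `φ''`. -/

section Marginals

variable {X : Type*} [Fintype X]

theorem sum_sum_mul_sub_eq_zero_of_marginals_eq {D : X → X → ℝ} {ρ : X → ℝ}
    (hrow : ∀ x, ∑ x', D x x' = ρ x) (hcol : ∀ x', ∑ x, D x x' = ρ x') (h : X → ℝ) :
    ∑ x, ∑ x', D x x' * (h x - h x') = 0 := by
  have hleft : ∑ x, ∑ x', D x x' * h x = ∑ x, ρ x * h x := by
    simp_rw [← Finset.sum_mul, hrow]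
  have hright : ∑ x, ∑ x', D x x' * h x' = ∑ x, ρ x * h x := by
    rw [Finset.sum_comm]
    simp_rw [← Finset.sum_mul, hcol]
  simp_rw [mul_sub, Finset.sum_sub_distrib, hleft, hright, sub_self]

theorem sum_sum_mul_score_eq_of_marginals_eq {D : X → X → ℝ} {ρ : X → ℝ}
    (hrow : ∀ x, ∑ x', D x x' = ρ x) (hcol : ∀ x', ∑ x, D x x' = ρ x')
    (k : X → X → ℝ) (c : ℝ) (h r : X → ℝ) :
    ∑ x, ∑ x', D x x' * (k x x' - c + h x - h x' + r x')
      = ∑ x, ∑ x', D x x' * k x x' - c * ∑ x, ρ x + ∑ x, ρ x * r x := by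
  have hcoboundary := sum_sum_mul_sub_eq_zero_of_marginals_eq hrow hcol h
  have hconst : ∑ x, ∑ x', D x x' * c = c * ∑ x, ρ x := by
    simp_rw [← Finset.sum_mul, hrow, mul_comm]
  have hlast : ∑ x, ∑ x', D x x' * r x' = ∑ x, ρ x * r x := by
    rw [Finset.sum_comm]
    simp_rw [← Finset.sum_mul, hcol]
  have hsplit : ∀ x x', D x x' * (k x x' - c + h x - h x' + r x')
      = D x x' * k x x' - D x x' * c + D x x' * (h x - h x') + D x x' * r x' := by
    intros; ring
  simp only [hsplit, Finset.sum_add_distrib, Finset.sum_sub_distrib]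
  rw [hcoboundary, hconst, hlast, add_zero]

end Marginals

theorem sum_eq_of_hasDerivAt_of_sum_eq {ι : Type*} [Fintype ι] {F : ℝ → ι → ℝ} {F' : ι → ℝ}
    {G : ℝ → ℝ} {G' θ : ℝ} (hsum : ∀ t, ∑ i, F t i = G t)
    (hF : ∀ i, HasDerivAt (fun t => F t i) (F' i) θ) (hG : HasDerivAt G G' θ) :
    ∑ i, F' i = G' := by
  have h := HasDerivAt.fun_sum (u := Finset.univ) fun i _ => hF i
  rw [funext hsum] at h
  exact h.unique hG

theorem hasDerivAt_mul_logDeriv {f : ℝ → ℝ} {θ : ℝ} (hf : DifferentiableAt ℝ f θ)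
    (h0 : f θ ≠ 0) : HasDerivAt f (f θ * logDeriv f θ) θ := by
  rw [logDeriv_apply, mul_div_cancel₀ _ h0]
  exact hf.hasDerivAt

theorem mul_deriv_log_sq_eq_of_hasDerivAt {f : ℝ → ℝ} {θ σ : ℝ}
    (hf : HasDerivAt f (f θ * σ) θ) :
    f θ * deriv (fun t => Real.log (f t)) θ ^ 2 = f θ * σ ^ 2 := by
  rcases eq_or_ne (f θ) 0 with h0 | h0
  · simp [h0]
  · rw [(hf.log h0).deriv]
    field_simp

theorem IsStationaryDistr.sum_mul_eq {X : Type*} [Fintype X] {M : Matrix X X ℝ} {P : X → ℝ}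
    (hP : IsStationaryDistr M P) (x : X) : ∑ x', M x x' * P x' = P x :=
  congrFun hP.2.2 x

section ExpFam

variable {X : Type*} [Fintype X] (W : Matrix X X ℝ) (g : X → X → ℝ) (φ : ℝ → ℝ)
  (v : ℝ → X → ℝ)

noncomputable def expFamScore (t : ℝ) (x x' : X) : ℝ :=
  g x x' - deriv φ t + logDeriv (fun s => v s x) t - logDeriv (fun s => v s x') t

variable {W g φ v}

theorem expFam_hasDerivAt {t : ℝ} {x x' : X} (hφ : DifferentiableAt ℝ φ t)
    (hvx : DifferentiableAt ℝ (fun s => v s x) t) (hvx' : DifferentiableAt ℝ (fun s => v s x') t)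
    (hx : v t x ≠ 0) (hx' : v t x' ≠ 0) :
    HasDerivAt (fun τ => expFam W g φ v τ x x')
      (expFam W g φ v t x x' * expFamScore g φ v t x x') t := by
  have hexp : HasDerivAt (fun τ => (Real.exp (φ τ))⁻¹)
      (-(Real.exp (φ t) * deriv φ t) / Real.exp (φ t) ^ 2) t :=
    (hφ.hasDerivAt.exp).inv (Real.exp_ne_zero _)
  have hinv : HasDerivAt (fun τ => (v τ x')⁻¹) (-deriv (fun s => v s x') t / v t x' ^ 2) t :=
    hvx'.hasDerivAt.inv hx'
  have htilt : HasDerivAt (fun τ => W x x' * Real.exp (τ * g x x'))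
      (W x x' * (Real.exp (t * g x x') * g x x')) t :=
    ((hasDerivAt_mul_const (g x x')).exp).const_mul _
  refine (((hexp.fun_mul hvx.hasDerivAt).fun_mul htilt).fun_mul hinv).congr_deriv ?_
  simp only [expFam, expFamScore, logDeriv_apply, Matrix.of_apply]
  field_simp
  ring

theorem sum_expFam_eq_one {t : ℝ} (x' : X) (hx' : v t x' ≠ 0)
    (heig : (tilted W g t)ᵀ *ᵥ v t = Real.exp (φ t) • v t) :
    ∑ x, expFam W g φ v t x x' = 1 := by
  have key := congrFun heig x'
  simp only [Matrix.mulVec, Matrix.transpose_apply, dotProduct, tilted, Matrix.of_apply,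
    Pi.smul_apply, smul_eq_mul] at key
  calc ∑ x, expFam W g φ v t x x'
      = (Real.exp (φ t))⁻¹ * (v t x')⁻¹ * ∑ x, W x x' * Real.exp (t * g x x') * v t x := by
        rw [Finset.mul_sum]
        refine Finset.sum_congr rfl fun x _ => ?_
        simp only [expFam, Matrix.of_apply]
        ring
    _ = 1 := by
        rw [key]
        field_simp

variable (hPD : IsPerronData W g φ v)
include hPD

theorem sum_expFam_mul_eq (t : ℝ) (x' : X) (p : ℝ) : ∑ x, expFam W g φ v t x x' * p = p := by
  rw [← Finset.sum_mul, sum_expFam_eq_one x' ((hPD t).1 x').ne' (hPD t).2, one_mul]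

variable (hφ : Differentiable ℝ φ) (hv : ∀ x, Differentiable ℝ (fun t => v t x))
include hφ hv

theorem expFam_hasDerivAt_of_perronData (t : ℝ) (x x' : X) :
    HasDerivAt (fun τ => expFam W g φ v τ x x')
      (expFam W g φ v t x x' * expFamScore g φ v t x x') t :=
  expFam_hasDerivAt (hφ t) (hv x t) (hv x' t) ((hPD t).1 x).ne' ((hPD t).1 x').ne'

theorem sum_expFam_mul_expFamScore (t : ℝ) (x' : X) :
    ∑ x, expFam W g φ v t x x' * expFamScore g φ v t x x' = 0 :=
  sum_eq_of_hasDerivAt_of_sum_eq (fun τ => sum_expFam_eq_one x' ((hPD τ).1 x').ne' (hPD τ).2)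
    (fun x => expFam_hasDerivAt_of_perronData hPD hφ hv t x x') (hasDerivAt_const t 1)

theorem deriv_eq_sum_sum_expFam_mul {P : ℝ → X → ℝ}
    (hP : ∀ t, IsStationaryDistr (expFam W g φ v t) (P t)) (t : ℝ) :
    deriv φ t = ∑ x, ∑ x', expFam W g φ v t x x' * P t x' * g x x' := by
  have hrow : ∀ x, ∑ x', expFam W g φ v t x x' * P t x' = P t x := (hP t).sum_mul_eq
  have hcol : ∀ x', ∑ x, expFam W g φ v t x x' * P t x' = P t x' := fun x' =>
    sum_expFam_mul_eq hPD t x' (P t x')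
  have hmean : ∑ x, ∑ x', expFam W g φ v t x x' * P t x' * expFamScore g φ v t x x' = 0 := by
    rw [Finset.sum_comm]
    refine Finset.sum_eq_zero fun x' _ => ?_
    simp_rw [mul_right_comm _ (P t x'), ← Finset.sum_mul,
      sum_expFam_mul_expFamScore hPD hφ hv t x', zero_mul]
  have h := sum_sum_mul_score_eq_of_marginals_eq hrow hcol g (deriv φ t)
    (fun x => logDeriv (fun s => v s x) t) (fun _ => 0)
  simp only [add_zero, mul_zero, Finset.sum_const_zero, (hP t).2.1, mul_one] at h
  simp only [expFamScore] at hmean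
  linarith

end ExpFam

theorem fisher_joint_decomposition_general {X : Type*} [Fintype X]
    (W : Matrix X X ℝ) (g : X → X → ℝ)
    (φ : ℝ → ℝ) (v : ℝ → X → ℝ) (hPD : IsPerronData W g φ v)
    (P1 : ℝ → X → ℝ) (hstat : ∀ θ : ℝ, IsStationaryDistr (expFam W g φ v θ) (P1 θ))
    (hφsmooth : ContDiff ℝ 2 φ)
    (hvdiff : ∀ x, Differentiable ℝ (fun t => v t x))
    (hPdiff : ∀ x, Differentiable ℝ (fun t => P1 t x))
    (θ : ℝ) (hPpos : ∀ x, 0 < P1 θ x) :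
    ∑ x, ∑ x', (expFam W g φ v θ x x' * P1 θ x') *
        (deriv (fun t => Real.log (expFam W g φ v t x x' * P1 t x')) θ) ^ 2
      = deriv (deriv φ) θ
        + ∑ x, P1 θ x * (deriv (fun t => Real.log (P1 t x)) θ) ^ 2 := by
  have hφ : Differentiable ℝ φ := hφsmooth.differentiable two_ne_zero
  set r : X → ℝ := fun x => logDeriv (fun t => P1 t x) θ
  set σ : X → X → ℝ := fun x x' => expFamScore g φ v θ x x' + r x'
  set D : X → X → ℝ := fun x x' => expFam W g φ v θ x x' * P1 θ x' * σ x x'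
  have hP : ∀ x, HasDerivAt (fun t => P1 t x) (P1 θ x * r x) θ := fun x =>
    hasDerivAt_mul_logDeriv (hPdiff x θ) (hPpos x).ne'
  have hQ : ∀ x x', HasDerivAt (fun t => expFam W g φ v t x x' * P1 t x') (D x x') θ :=
    fun x x' => ((expFam_hasDerivAt_of_perronData hPD hφ hvdiff θ x x').fun_mul
      (hP x')).congr_deriv (by ring)
  have hrow : ∀ x, ∑ x', D x x' = P1 θ x * r x := fun x =>
    sum_eq_of_hasDerivAt_of_sum_eq (fun t => (hstat t).sum_mul_eq x) (hQ x) (hP x)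
  have hcol : ∀ x', ∑ x, D x x' = P1 θ x' * r x' := fun x' =>
    sum_eq_of_hasDerivAt_of_sum_eq (fun t => sum_expFam_mul_eq hPD t x' (P1 t x'))
      (fun x => hQ x x') (hP x')
  have hmass : ∑ x, P1 θ x * r x = 0 :=
    sum_eq_of_hasDerivAt_of_sum_eq (fun t => (hstat t).2.1) hP (hasDerivAt_const θ 1)
  have hφ'' : deriv (deriv φ) θ = ∑ x, ∑ x', D x x' * g x x' := by
    rw [funext (deriv_eq_sum_sum_expFam_mul hPD hφ hvdiff hstat)]
    exact (HasDerivAt.fun_sum fun x _ => HasDerivAt.fun_sum fun x' _ =>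
      (hQ x x').mul_const (g x x')).deriv
  calc _ = ∑ x, ∑ x', D x x' * σ x x' :=
        Finset.sum_congr rfl fun x _ => Finset.sum_congr rfl fun x' _ => by
          rw [mul_deriv_log_sq_eq_of_hasDerivAt (hQ x x')]
          ring
    _ = ∑ x, ∑ x', D x x' * g x x' - deriv φ θ * ∑ x, P1 θ x * r x
          + ∑ x, P1 θ x * r x * r x :=
        sum_sum_mul_score_eq_of_marginals_eq hrow hcol g (deriv φ θ)
          (fun x => logDeriv (fun s => v s x) θ) r
    _ = _ := by
        rw [hmass, ← hφ'', mul_zero, sub_zero]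
        congr 1
        exact Finset.sum_congr rfl fun x _ => by
          rw [mul_deriv_log_sq_eq_of_hasDerivAt (hP x)]
          ring

/-- the Fisher information of the stationary joint-distribution
family `{W_θ × P¹_θ}` decomposes as `J²_θ = φ''(θ) + J¹_θ`, where `J¹_θ` is the
Fisher information of the stationary-distribution family `{P¹_θ}`. -/
theorem fisher_joint_decomposition {X : Type*} [Fintype X] [DecidableEq X]
    (W : Matrix X X ℝ) (g : X → X → ℝ)
    (hW : IsTransition W) (hirr : IsIrred W)
    (φ : ℝ → ℝ) (v : ℝ → X → ℝ) (hPD : IsPerronData W g φ v)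
    (P1 : ℝ → X → ℝ) (hstat : ∀ θ : ℝ, IsStationaryDistr (expFam W g φ v θ) (P1 θ))
    (hφsmooth : ContDiff ℝ 2 φ)
    (hvdiff : ∀ x, Differentiable ℝ (fun t => v t x))
    (hPdiff : ∀ x, Differentiable ℝ (fun t => P1 t x))
    (θ : ℝ) (hPpos : ∀ x, 0 < P1 θ x) :
    ∑ x, ∑ x', (expFam W g φ v θ x x' * P1 θ x') *
        (deriv (fun t => Real.log (expFam W g φ v t x x' * P1 t x')) θ) ^ 2
      = deriv (deriv φ) θ
        + ∑ x, P1 θ x * (deriv (fun t => Real.log (P1 t x)) θ) ^ 2 :=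
  fisher_joint_decomposition_general W g φ v hPD P1 hstat hφsmooth hvdiff hPdiff θ hPpos
end

section
/- Let T be the set of transpositions (i,j) with 0 ≤ i < j ≤ m, and H the set of 3-cycles (0,i,j) with 0 < i < j ≤ m, acting on {0,1,…,m}. For each permutation σ define the (m+1)×(m+1) matrix ĝ_σ := W_σ − W_id, where W_σ(x|x') = δ_{x,σ(x')}. Then the family {ĝ_σ : σ ∈ T ∪ H} of m² matrices is linearly independent in the space B of matrices with all row sums and all column sums equal to zero, and hence spans B. -/
open Matrix

/-- `σ` is a transposition `(i j)` with `i < j`, or a 3-cycle `(0 i j)` with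
`0 < i < j`, i.e. `σ ∈ T ∪ H`. -/
def InTH {m : ℕ} (σ : Equiv.Perm (Fin (m + 1))) : Prop :=
  (∃ i j : Fin (m + 1), i < j ∧ σ = Equiv.swap i j) ∨
  (∃ i j : Fin (m + 1), 0 < i ∧ i < j ∧ σ = Equiv.swap 0 j * Equiv.swap 0 i)

/-- The matrix `ĝ_σ = W_σ - W_id`, where `W_σ(x|x') = δ_{x,σ(x')}`. -/
def permDiff {m : ℕ} (σ : Equiv.Perm (Fin (m + 1))) : Matrix (Fin (m + 1)) (Fin (m + 1)) ℝ :=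
  Matrix.of fun x x' => (if x = σ x' then (1 : ℝ) else 0) - (if x = x' then (1 : ℝ) else 0)

/-! A matrix with zero row and column sums is determined by its entries off row and column `0`,
so it is a combination of the matrices `E_xy - E_x0 - E_0y + E_00` (`zeroMarginSingle x y`)
with `x, y ≠ 0`. These are obtained triangularly from `ĝ_(0 x)` (diagonal), `ĝ_(0 i j)` (below
the diagonal) and `ĝ_(i j)` (above it). Independence is read off the off-diagonal entries: for
`0 < x < y` the entry `(x, y)` sees only `ĝ_(x y)`, the entry `(y, x)` sees `ĝ_(x y)` and
`ĝ_(0 x y)`, and the entry `(0, y)` sees `ĝ_(0 y)` and the 3-cycles `ĝ_(0 i y)`. -/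

open Finset Equiv

theorem Equiv.eq_swap_apply_iff {α : Type*} [DecidableEq α] {i j x y : α} (hxy : x ≠ y) :
    x = swap i j y ↔ (y = i ∧ x = j) ∨ (y = j ∧ x = i) := by
  rw [swap_apply_def]
  grind

theorem Equiv.eq_swap_mul_swap_apply_iff {α : Type*} [DecidableEq α] {i j k x y : α}
    (hjk : j ≠ k) (hxy : x ≠ y) :
    x = (swap i k * swap i j) y ↔
      (y = i ∧ x = j) ∨ (y = j ∧ x = k) ∨ (y = k ∧ x = i) := by
  simp only [Perm.mul_apply, swap_apply_def]
  grind

section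

variable {m : ℕ}

theorem coeff_eq_zero_of_sum_smul_permDiff_eq_zero {ι : Type*} [Fintype ι]
    {σ : ι → Perm (Fin (m + 1))} {c : ι → ℝ} (hc : ∑ i, c i • permDiff (σ i) = 0)
    {x y : Fin (m + 1)} (hxy : x ≠ y) {τ : ι} (hτ : x = σ τ y)
    (hother : ∀ i ≠ τ, x = σ i y → c i = 0) : c τ = 0 := by
  have hentry := congrFun (congrFun hc x) y
  simp only [Matrix.sum_apply, Matrix.smul_apply, permDiff, of_apply, if_neg hxy, sub_zero,
    smul_eq_mul, mul_ite, mul_one, mul_zero, Matrix.zero_apply] at hentry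
  rwa [Finset.sum_eq_single τ (fun i _ hi => ite_eq_right_iff.2 (hother i hi))
    (fun h => (h (mem_univ τ)).elim), if_pos hτ] at hentry

theorem linearIndependent_permDiff :
    LinearIndependent ℝ (fun σ : {σ : Perm (Fin (m + 1)) // InTH σ} => permDiff σ.1) := by
  classical
  rw [Fintype.linearIndependent_iff]
  intro c hc
  have h_swap : ∀ x y, 0 < x → x < y → ∀ h : InTH (swap x y), c ⟨swap x y, h⟩ = 0 := by
    intro x y hx hxy h
    refine coeff_eq_zero_of_sum_smul_permDiff_eq_zero hc hxy.ne (swap_apply_right x y).symm ?_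
    rintro ⟨σ, ⟨i, j, hij, rfl⟩ | ⟨i, j, hi, hij, rfl⟩⟩ hne hmove
    · rw [eq_swap_apply_iff hxy.ne] at hmove
      grind
    · rw [eq_swap_mul_swap_apply_iff hij.ne hxy.ne] at hmove
      grind
  have h_cycle : ∀ x y, 0 < x → x < y → ∀ h : InTH (swap 0 y * swap 0 x),
      c ⟨swap 0 y * swap 0 x, h⟩ = 0 := by
    intro x y hx hxy h
    refine coeff_eq_zero_of_sum_smul_permDiff_eq_zero hc hxy.ne' (τ := ⟨_, h⟩)
      ((eq_swap_mul_swap_apply_iff hxy.ne hxy.ne').2 (Or.inr (Or.inl ⟨rfl, rfl⟩))) ?_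
    rintro ⟨σ, ⟨i, j, hij, rfl⟩ | ⟨i, j, hi, hij, rfl⟩⟩ hne hmove
    · rw [eq_swap_apply_iff hxy.ne'] at hmove
      obtain ⟨rfl, rfl⟩ : i = x ∧ j = y := by grind
      exact h_swap i j hx hij _
    · rw [eq_swap_mul_swap_apply_iff hij.ne hxy.ne'] at hmove
      grind
  have h_swap_zero : ∀ y, 0 < y → ∀ h : InTH (swap 0 y), c ⟨swap 0 y, h⟩ = 0 := by
    intro y hy h
    refine coeff_eq_zero_of_sum_smul_permDiff_eq_zero hc hy.ne (swap_apply_right 0 y).symm ?_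
    rintro ⟨σ, ⟨i, j, hij, rfl⟩ | ⟨i, j, hi, hij, rfl⟩⟩ hne hmove
    · rw [eq_swap_apply_iff hy.ne] at hmove
      grind
    · rw [eq_swap_mul_swap_apply_iff hij.ne hy.ne] at hmove
      obtain rfl : j = y := by grind
      exact h_cycle i j hi hij _
  rintro ⟨σ, ⟨i, j, hij, rfl⟩ | ⟨i, j, hi, hij, rfl⟩⟩
  · rcases (Fin.zero_le i).eq_or_lt with rfl | hi
    · exact h_swap_zero j hij _
    · exact h_swap i j hi hij _
  · exact h_cycle i j hi hij _

theorem permDiff_swap (i j : Fin (m + 1)) :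
    permDiff (swap i j) = single i j 1 + single j i 1 - single i i 1 - single j j 1 := by
  ext a b
  simp only [permDiff, of_apply, Matrix.add_apply, Matrix.sub_apply, single_apply, swap_apply_def]
  grind

theorem permDiff_swap_mul_swap {i j k : Fin (m + 1)} (hjk : j ≠ k) :
    permDiff (swap i k * swap i j) = single j i 1 + single k j 1 + single i k 1
      - single i i 1 - single j j 1 - single k k 1 := by
  ext a b
  simp only [permDiff, of_apply, Matrix.add_apply, Matrix.sub_apply, single_apply,
    Perm.mul_apply, swap_apply_def]
  grind

def zeroMarginSingle {R : Type*} [Ring R] (x y : Fin (m + 1)) :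
    Matrix (Fin (m + 1)) (Fin (m + 1)) R :=
  single x y 1 - single x 0 1 - single 0 y 1 + single 0 0 1

theorem eq_sum_zeroMarginSingle {R : Type*} [Ring R]
    {A : Matrix (Fin (m + 1)) (Fin (m + 1)) R}
    (hcol : ∀ y, ∑ x, A x y = 0) (hrow : ∀ x, ∑ y, A x y = 0) :
    A = ∑ x : Fin m, ∑ y : Fin m, A x.succ y.succ • zeroMarginSingle x.succ y.succ := by
  have hcol' : ∀ y, A 0 y = -∑ x : Fin m, A x.succ y := fun y =>
    eq_neg_of_add_eq_zero_left ((Fin.sum_univ_succ _).symm.trans (hcol y))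
  have hrow' : ∀ x, A x 0 = -∑ y : Fin m, A x y.succ := fun x =>
    eq_neg_of_add_eq_zero_left ((Fin.sum_univ_succ _).symm.trans (hrow x))
  ext a b
  simp only [Matrix.sum_apply, Matrix.smul_apply, zeroMarginSingle, Matrix.add_apply,
    Matrix.sub_apply, single_apply]
  cases a using Fin.cases <;> cases b using Fin.cases <;>
    simp [Fin.succ_ne_zero, (Fin.succ_ne_zero _).symm, hcol', hrow', ite_and]

theorem permDiff_mem_span {σ : Perm (Fin (m + 1))} (hσ : InTH σ) :
    permDiff σ ∈ Submodule.span ℝ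
      (Set.range fun σ : {σ : Perm (Fin (m + 1)) // InTH σ} => permDiff σ.1) :=
  Submodule.subset_span ⟨⟨σ, hσ⟩, rfl⟩

theorem zeroMarginSingle_mem_span {x y : Fin (m + 1)} (hx : x ≠ 0) (hy : y ≠ 0) :
    zeroMarginSingle x y ∈ Submodule.span ℝ
      (Set.range fun σ : {σ : Perm (Fin (m + 1)) // InTH σ} => permDiff σ.1) := by
  set V := Submodule.span ℝ
    (Set.range fun σ : {σ : Perm (Fin (m + 1)) // InTH σ} => permDiff σ.1)
  have h_diag : ∀ z ≠ 0, zeroMarginSingle z z ∈ V := by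
    intro z hz
    have h := permDiff_mem_span (Or.inl ⟨0, z, Fin.pos_iff_ne_zero.2 hz, rfl⟩)
    rw [permDiff_swap] at h
    have key : zeroMarginSingle (R := ℝ) z z
        = -(single 0 z 1 + single z 0 1 - single 0 0 1 - single z z 1) := by
      simp only [zeroMarginSingle]; abel
    rw [key]
    exact neg_mem h
  have h_lower : ∀ i j, 0 < i → i < j → zeroMarginSingle j i ∈ V := by
    intro i j hi hij
    have h := permDiff_mem_span (Or.inr ⟨i, j, hi, hij, rfl⟩)
    rw [permDiff_swap_mul_swap hij.ne] at h
    have key : zeroMarginSingle (R := ℝ) j i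
        = single i 0 1 + single j i 1 + single 0 j 1 - single 0 0 1 - single i i 1 - single j j 1
          + zeroMarginSingle i i + zeroMarginSingle j j := by
      simp only [zeroMarginSingle]; abel
    rw [key]
    exact add_mem (add_mem h (h_diag i hi.ne')) (h_diag j (hi.trans hij).ne')
  rcases lt_trichotomy x y with hxy | rfl | hxy
  · have h := permDiff_mem_span (Or.inl ⟨x, y, hxy, rfl⟩)
    rw [permDiff_swap] at h
    have key : zeroMarginSingle (R := ℝ) x y
        = single x y 1 + single y x 1 - single x x 1 - single y y 1
          - zeroMarginSingle y x + zeroMarginSingle x x + zeroMarginSingle y y := by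
      simp only [zeroMarginSingle]; abel
    rw [key]
    exact add_mem (add_mem (sub_mem h (h_lower x y (Fin.pos_iff_ne_zero.2 hx) hxy))
      (h_diag x hx)) (h_diag y hy)
  · exact h_diag x hx
  · exact h_lower y x (Fin.pos_iff_ne_zero.2 hy) hxy

end

theorem permDiff_linearIndependent_span_general (m : ℕ) :
    LinearIndependent ℝ
      (fun σ : {σ : Equiv.Perm (Fin (m + 1)) // InTH σ} => permDiff σ.1)
    ∧ ∀ A : Matrix (Fin (m + 1)) (Fin (m + 1)) ℝ,
        (∀ y, ∑ x, A x y = 0) → (∀ x, ∑ y, A x y = 0) →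
        A ∈ Submodule.span ℝ
          (Set.range fun σ : {σ : Equiv.Perm (Fin (m + 1)) // InTH σ} => permDiff σ.1) :=
  ⟨linearIndependent_permDiff, fun A hcol hrow => by
    rw [eq_sum_zeroMarginSingle hcol hrow]
    exact Submodule.sum_mem _ fun x _ => Submodule.sum_mem _ fun y _ =>
      Submodule.smul_mem _ _ (zeroMarginSingle_mem_span x.succ_ne_zero y.succ_ne_zero)⟩

/-- the `m²` matrices `{ĝ_σ : σ ∈ T ∪ H}` are linearly independent
and span the space `B` of matrices with all row sums and column sums zero. -/
theorem permDiff_linearIndependent_span (m : ℕ) (hm : 1 ≤ m) :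
    LinearIndependent ℝ
      (fun σ : {σ : Equiv.Perm (Fin (m + 1)) // InTH σ} => permDiff σ.1)
    ∧ ∀ A : Matrix (Fin (m + 1)) (Fin (m + 1)) ℝ,
        (∀ y, ∑ x, A x y = 0) → (∀ x, ∑ y, A x y = 0) →
        A ∈ Submodule.span ℝ
          (Set.range fun σ : {σ : Equiv.Perm (Fin (m + 1)) // InTH σ} => permDiff σ.1) :=
  permDiff_linearIndependent_span_general m
end

section
/- Let W be an irreducible transition matrix on finite X and suppose Σ_j θ'^j g_j(x,x') − Σ_j θ^j g_j(x,x') = f(x) − f(x') + C for all (x,x') in the support of W, for some f : X → ℝ and constant C. Then the corresponding exponential-family transition matrices coincide: W_{θ'} = W_θ. Conversely, if the parametrization θ ↦ W_θ fails to be injective, such a relation f, C exists; i.e., the parametrization is faithful if and only if the generators {g_j} are linearly independent modulo functions of the form (x,x') ↦ f(x) − f(x') + c on the support of W. -/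
open Matrix Real

/-- The multi-parameter tilted matrix
`W̄_θ(x|x') = W(x|x')·exp(Σ_j θ^j g_j(x,x'))`. -/
noncomputable def tiltedM {X : Type*} [Fintype X] {d : ℕ} (W : Matrix X X ℝ)
    (g : Fin d → X → X → ℝ) (θ : Fin d → ℝ) : Matrix X X ℝ :=
  Matrix.of fun x x' => W x x' * Real.exp (∑ j, θ j * g j x x')

/-- The multi-parameter exponential family
`W_θ(x|x') = λ_θ⁻¹·v_θ(x)·W̄_θ(x|x')·v_θ(x')⁻¹`. -/
noncomputable def expFamM {X : Type*} [Fintype X] {d : ℕ} (W : Matrix X X ℝ)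
    (g : Fin d → X → X → ℝ) (φ : (Fin d → ℝ) → ℝ) (v : (Fin d → ℝ) → X → ℝ)
    (θ : Fin d → ℝ) : Matrix X X ℝ :=
  Matrix.of fun x x' =>
    (Real.exp (φ θ))⁻¹ * v θ x * (W x x' * Real.exp (∑ j, θ j * g j x x')) * (v θ x')⁻¹

/-- `φ` and `v` are the Perron data of the tilted matrices: `v_θ` is a positive
eigenvector of `W̄_θᵀ` with eigenvalue `e^{φ(θ)}`. -/
def IsPerronDataM {X : Type*} [Fintype X] {d : ℕ} (W : Matrix X X ℝ)
    (g : Fin d → X → X → ℝ) (φ : (Fin d → ℝ) → ℝ) (v : (Fin d → ℝ) → X → ℝ) : Prop :=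
  ∀ θ : Fin d → ℝ, (∀ x, 0 < v θ x) ∧
    (tiltedM W g θ)ᵀ *ᵥ v θ = Real.exp (φ θ) • v θ

/-!
On the support of `W`, the relation says `W̄_{θ'} = e^C · D W̄_θ D⁻¹` with `D = diag (e^f)`.
Hence `v_θ e^{-f}` is a positive eigenvector of `W̄_{θ'}ᵀ` with eigenvalue `e^{φ(θ) + C}`.
A nonnegative irreducible matrix has, up to scaling, only one positive eigenvector, and only
one eigenvalue carrying one, so `v_{θ'} = t · v_θ e^{-f}` and `φ(θ') = φ(θ) + C`; the
normalization in `W_θ` then cancels the conjugation. Conversely, on the support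
`log W_θ(x|x') = log W(x|x') + θ·g(x,x') + log v_θ(x) - log v_θ(x') - φ(θ)`, so equal
matrices give the relation with `f = log v_θ - log v_{θ'}` and `C = φ(θ') - φ(θ)`.
-/

section PositiveEigenvector

variable {X : Type*} [Fintype X] {M : Matrix X X ℝ} {u w : X → ℝ} {r s : ℝ}

lemma exists_forall_le_div_mul [Nonempty X] (u : X → ℝ) (hw : ∀ x, 0 < w x) :
    ∃ x₀, ∀ x, u x ≤ u x₀ / w x₀ * w x := by
  obtain ⟨x₀, hx₀⟩ := Finite.exists_max fun x => u x / w x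
  exact ⟨x₀, fun x => (div_le_iff₀ (hw x)).1 (hx₀ x)⟩

lemma mulVec_le_mulVec_of_nonneg (hM : ∀ x y, 0 ≤ M x y) (h : ∀ x, u x ≤ w x) (x : X) :
    (M *ᵥ u) x ≤ (M *ᵥ w) x :=
  Finset.sum_le_sum fun y _ => mul_le_mul_of_nonneg_left (h y) (hM x y)

/-- Compare `u` with the least multiple of `w` above it, at a point where they touch. -/
lemma eigenvalue_le_of_pos_eigenvectors [Nonempty X] (hM : ∀ x y, 0 ≤ M x y)
    (hu : ∀ x, 0 < u x) (hw : ∀ x, 0 < w x)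
    (hMu : M *ᵥ u = r • u) (hMw : M *ᵥ w = s • w) : r ≤ s := by
  obtain ⟨x₀, hx₀⟩ := exists_forall_le_div_mul u hw
  set t := u x₀ / w x₀
  have htouch : t * w x₀ = u x₀ := div_mul_cancel₀ _ (hw x₀).ne'
  have hle := mulVec_le_mulVec_of_nonneg hM (w := t • w) hx₀ x₀
  rw [mulVec_smul, hMu, hMw] at hle
  simp only [Pi.smul_apply, smul_eq_mul] at hle
  have : r * u x₀ ≤ s * u x₀ := calc
    r * u x₀ ≤ t * (s * w x₀) := hle
    _ = s * u x₀ := by rw [← htouch]; ring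
  exact le_of_mul_le_mul_right this (hu x₀)

lemma pow_mulVec_of_mulVec_eq_smul [DecidableEq X] (h : M *ᵥ u = r • u) (n : ℕ) :
    (M ^ n) *ᵥ u = r ^ n • u := by
  induction n with
  | zero => simp
  | succ n ih => rw [pow_succ, ← mulVec_mulVec, h, mulVec_smul, ih, smul_smul, pow_succ']

lemma eq_zero_of_nonneg_eigenvector [DecidableEq X] (hM : ∀ x y, 0 ≤ M x y) (hirr : IsIrred M)
    (hu : ∀ x, 0 ≤ u x) (hMu : M *ᵥ u = r • u) {x₀ : X} (hx₀ : u x₀ = 0) : u = 0 := by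
  funext x
  obtain ⟨n, hn⟩ := hirr x₀ x
  have hsum : ∑ y, (M ^ n) x₀ y * u y = 0 := by
    have := congrFun (pow_mulVec_of_mulVec_eq_smul hMu n) x₀
    simpa [mulVec, dotProduct, hx₀] using this
  have hterm := (Finset.sum_eq_zero_iff_of_nonneg fun y _ =>
    mul_nonneg (pow_apply_nonneg hM n x₀ y) (hu y)).1 hsum x (Finset.mem_univ x)
  exact (mul_eq_zero.1 hterm).resolve_left hn.ne'

lemma pos_eigenvector_unique [DecidableEq X] [Nonempty X] (hM : ∀ x y, 0 ≤ M x y)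
    (hirr : IsIrred M) (hu : ∀ x, 0 < u x) (hw : ∀ x, 0 < w x)
    (hMu : M *ᵥ u = r • u) (hMw : M *ᵥ w = s • w) :
    r = s ∧ ∃ t : ℝ, 0 < t ∧ u = t • w := by
  obtain rfl : r = s := le_antisymm (eigenvalue_le_of_pos_eigenvectors hM hu hw hMu hMw)
    (eigenvalue_le_of_pos_eigenvectors hM hw hu hMw hMu)
  obtain ⟨x₀, hx₀⟩ := exists_forall_le_div_mul u hw
  set t := u x₀ / w x₀
  have hgap : t • w - u = 0 := by
    refine eq_zero_of_nonneg_eigenvector hM hirr (r := r) (x₀ := x₀) (fun x => ?_) ?_ ?_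
    · simpa using hx₀ x
    · rw [mulVec_sub, mulVec_smul, hMu, hMw, smul_comm, smul_sub]
    · simp [t, div_mul_cancel₀ _ (hw x₀).ne']
  exact ⟨rfl, t, div_pos (hu x₀) (hw x₀), (sub_eq_zero.1 hgap).symm⟩

end PositiveEigenvector

section Irreducible

variable {X : Type*} [Fintype X] [DecidableEq X] {A B : Matrix X X ℝ}

lemma pow_apply_pos_of_pos_imp (hA : ∀ x y, 0 ≤ A x y) (hB : ∀ x y, 0 ≤ B x y)
    (hAB : ∀ x y, 0 < A x y → 0 < B x y) (n : ℕ) {x y : X} (h : 0 < (A ^ n) x y) :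
    0 < (B ^ n) x y := by
  induction n generalizing y with
  | zero => rwa [pow_zero] at h ⊢
  | succ n ih =>
    rw [pow_succ, mul_apply] at h ⊢
    obtain ⟨z, -, hz⟩ := (Finset.sum_pos_iff_of_nonneg fun z _ =>
      mul_nonneg (pow_apply_nonneg hA n x z) (hA z y)).1 h
    have hAn := pos_of_mul_pos_left hz (hA z y)
    have hAzy := pos_of_mul_pos_right hz (pow_apply_nonneg hA n x z)
    exact (Finset.sum_pos_iff_of_nonneg fun z _ =>
      mul_nonneg (pow_apply_nonneg hB n x z) (hB z y)).2
      ⟨z, Finset.mem_univ z, mul_pos (ih hAn) (hAB z y hAzy)⟩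

lemma IsIrred.of_pos_imp (hirr : IsIrred A) (hA : ∀ x y, 0 ≤ A x y) (hB : ∀ x y, 0 ≤ B x y)
    (hAB : ∀ x y, 0 < A x y → 0 < B x y) : IsIrred B := fun x y =>
  (hirr x y).imp fun n => pow_apply_pos_of_pos_imp hA hB hAB n

lemma IsIrred.transpose (hirr : IsIrred A) : IsIrred Aᵀ := fun x y =>
  (hirr y x).imp fun n hn => by rwa [← transpose_pow]

end Irreducible

section ExpFamily

variable {X : Type*} [Fintype X] {d : ℕ} {W : Matrix X X ℝ} {g : Fin d → X → X → ℝ}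

lemma tiltedM_nonneg (hW : ∀ x x', 0 ≤ W x x') (θ : Fin d → ℝ) (x x' : X) :
    0 ≤ tiltedM W g θ x x' :=
  mul_nonneg (hW x x') (exp_pos _).le

lemma isIrred_tiltedM_transpose [DecidableEq X] (hW : ∀ x x', 0 ≤ W x x') (hirr : IsIrred W)
    (θ : Fin d → ℝ) : IsIrred (tiltedM W g θ)ᵀ :=
  (hirr.of_pos_imp hW (tiltedM_nonneg hW θ) fun _ _ h => mul_pos h (exp_pos _)).transpose

lemma tiltedM_apply_of_shift (hW : ∀ x x', 0 ≤ W x x') {θ θ' : Fin d → ℝ} {f : X → ℝ} {C : ℝ}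
    (hshift : ∀ x x', 0 < W x x' →
      (∑ j, θ' j * g j x x') - (∑ j, θ j * g j x x') = f x - f x' + C) (x x' : X) :
    tiltedM W g θ' x x' = exp (f x - f x' + C) * tiltedM W g θ x x' := by
  simp only [tiltedM, of_apply]
  rcases (hW x x').eq_or_lt with h0 | hpos
  · simp [← h0]
  · rw [← hshift x x' hpos, mul_left_comm, ← exp_add, sub_add_cancel]

/-- The conjugation by `diag (exp f)` hidden in `M'` is undone on the eigenvector. -/
lemma transpose_mulVec_of_apply_eq_exp_mul {M M' : Matrix X X ℝ} {f : X → ℝ} {c l : ℝ}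
    {u : X → ℝ} (hM' : ∀ x x', M' x x' = exp (f x - f x' + c) * M x x')
    (hu : Mᵀ *ᵥ u = l • u) :
    M'ᵀ *ᵥ (fun x => u x * exp (-f x)) = (exp c * l) • fun x => u x * exp (-f x) := by
  funext x'
  have hx' := congrFun hu x'
  simp only [mulVec, dotProduct, transpose_apply, Pi.smul_apply, smul_eq_mul] at hx' ⊢
  calc ∑ x, M' x x' * (u x * exp (-f x))
      = exp c * exp (-f x') * ∑ x, M x x' * u x := by
        rw [Finset.mul_sum]
        refine Finset.sum_congr rfl fun x _ => ?_
        rw [hM', exp_add, exp_sub, exp_neg, exp_neg]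
        field_simp
    _ = exp c * l * (u x' * exp (-f x')) := by rw [hx']; ring

lemma expFamM_apply_eq_mul_exp {φ : (Fin d → ℝ) → ℝ} {v : (Fin d → ℝ) → X → ℝ}
    {θ : Fin d → ℝ} (hv : ∀ x, 0 < v θ x) (x x' : X) :
    expFamM W g φ v θ x x' =
      W x x' * exp (∑ j, θ j * g j x x' + log (v θ x) - log (v θ x') - φ θ) := by
  simp only [expFamM, of_apply]
  rw [exp_sub, exp_sub, exp_add, exp_log (hv x), exp_log (hv x')]
  field_simp

end ExpFamily

/-- the parametrization `θ ↦ W_θ` identifies `θ` and `θ'` exactly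
when `Σ_j θ'^j g_j − Σ_j θ^j g_j` is of the form `f(x) − f(x') + C` on the
support of `W`; i.e. it is faithful iff the generators are linearly independent
modulo such functions. -/
theorem expFam_faithfulness {X : Type*} [Fintype X] [DecidableEq X] {d : ℕ}
    (W : Matrix X X ℝ) (g : Fin d → X → X → ℝ)
    (hW : IsTransition W) (hirr : IsIrred W)
    (φ : (Fin d → ℝ) → ℝ) (v : (Fin d → ℝ) → X → ℝ)
    (hPD : IsPerronDataM W g φ v) :
    (∀ (θ θ' : Fin d → ℝ) (f : X → ℝ) (C : ℝ),
      (∀ x x', 0 < W x x' →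
        (∑ j, θ' j * g j x x') - (∑ j, θ j * g j x x') = f x - f x' + C) →
      expFamM W g φ v θ' = expFamM W g φ v θ)
    ∧ (∀ θ θ' : Fin d → ℝ, expFamM W g φ v θ' = expFamM W g φ v θ →
        ∃ (f : X → ℝ) (C : ℝ), ∀ x x', 0 < W x x' →
          (∑ j, θ' j * g j x x') - (∑ j, θ j * g j x x') = f x - f x' + C) := by
  refine ⟨fun θ θ' f C hshift => ?_, fun θ θ' heq => ?_⟩
  · rcases isEmpty_or_nonempty X with _ | _
    · ext x; exact isEmptyElim x
    obtain ⟨hvθ, heigθ⟩ := hPD θ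
    obtain ⟨hvθ', heigθ'⟩ := hPD θ'
    have heig := transpose_mulVec_of_apply_eq_exp_mul (tiltedM_apply_of_shift hW.1 hshift) heigθ
    obtain ⟨hφ, t, ht, hv⟩ := pos_eigenvector_unique (fun x x' => tiltedM_nonneg hW.1 θ' x' x)
      (isIrred_tiltedM_transpose hW.1 hirr θ') hvθ' (fun x => mul_pos (hvθ x) (exp_pos _))
      heigθ' heig
    rw [← exp_add, exp_eq_exp] at hφ
    have hlog : ∀ x, log (v θ' x) = log t + log (v θ x) - f x := fun x => by
      rw [hv, Pi.smul_apply, smul_eq_mul, log_mul ht.ne' (mul_pos (hvθ x) (exp_pos _)).ne',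
        log_mul (hvθ x).ne' (exp_pos _).ne', log_exp]
      ring
    ext x x'
    rw [expFamM_apply_eq_mul_exp hvθ', expFamM_apply_eq_mul_exp hvθ]
    rcases (hW.1 x x').eq_or_lt with h0 | hpos
    · rw [← h0, zero_mul, zero_mul]
    · rw [hlog, hlog, hφ, ← sub_add_cancel (∑ j, θ' j * g j x x') (∑ j, θ j * g j x x'),
        hshift x x' hpos]
      ring_nf
  · refine ⟨fun x => log (v θ x) - log (v θ' x), φ θ' - φ θ, fun x x' hpos => ?_⟩
    have hentry := congrFun (congrFun heq x) x'
    rw [expFamM_apply_eq_mul_exp (hPD θ').1, expFamM_apply_eq_mul_exp (hPD θ).1,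
      mul_right_inj' hpos.ne', exp_eq_exp] at hentry
    linarith
end
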